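/- If G is a finite simple graph with at least one edge and there exists a graph homomorphism from G to an edge-transitive finite simple graph H, then λ_max(H)/|λ_min(H)| ≥ max{ s⁺(G)/s⁻(G), s⁻(G)/s⁺(G) }, where λ_max(H) and λ_min(H) denote the largest and smallest eigenvalues of the adjacency matrix of H. -/

import Mathlib

open Matrix Finset

namespace SpectralFrac

variable {V : Type*}

/-- The real adjacency matrix of a simple graph is Hermitian. -/
theorem adjMatrix_isHermitian [Fintype V] [DecidableEq V] (G : SimpleGraph V)
    [DecidableRel G.Adj] : (G.adjMatrix ℝ).IsHermitian := by
  rw [Matrix.IsHermitian, Matrix.conjTranspose_eq_transpose_of_trivial]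
  exact G.isSymm_adjMatrix

/-- `s⁺(G)`: the sum of the squares of the positive eigenvalues of the adjacency matrix. -/
noncomputable def sPos [Fintype V] [DecidableEq V] (G : SimpleGraph V) [DecidableRel G.Adj] : ℝ :=
  ∑ i, if 0 < (adjMatrix_isHermitian G).eigenvalues i
    then ((adjMatrix_isHermitian G).eigenvalues i) ^ 2 else 0

/-- `s⁻(G)`: the sum of the squares of the negative eigenvalues of the adjacency matrix. -/
noncomputable def sNeg [Fintype V] [DecidableEq V] (G : SimpleGraph V) [DecidableRel G.Adj] : ℝ :=
  ∑ i, if (adjMatrix_isHermitian G).eigenvalues i < 0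
    then ((adjMatrix_isHermitian G).eigenvalues i) ^ 2 else 0

/-- The largest eigenvalue of the adjacency matrix of `G`. -/
noncomputable def lamMax [Fintype V] [DecidableEq V] (G : SimpleGraph V) [DecidableRel G.Adj] : ℝ :=
  ⨆ i, (adjMatrix_isHermitian G).eigenvalues i

/-- The smallest eigenvalue of the adjacency matrix of `G`. -/
noncomputable def lamMin [Fintype V] [DecidableEq V] (G : SimpleGraph V) [DecidableRel G.Adj] : ℝ :=
  ⨅ i, (adjMatrix_isHermitian G).eigenvalues i

/-- A graph is edge-transitive if its automorphism group acts transitively on edges. -/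
def IsEdgeTransitive (H : SimpleGraph V) : Prop :=
  ∀ ⦃u v x y : V⦄, H.Adj u v → H.Adj x y → ∃ π : H ≃g H, s(π u, π v) = s(x, y)

/-- A graph is vertex-transitive if its automorphism group acts transitively on vertices. -/
def IsVertexTransitive (H : SimpleGraph V) : Prop :=
  ∀ u v : V, ∃ π : H ≃g H, π u = v

/-- The Kneser graph `K_{n;k}`: vertices are `k`-subsets of an `n`-set, adjacent iff disjoint. -/
def kneserGraph (n k : ℕ) : SimpleGraph {s : Finset (Fin n) // s.card = k} where
  Adj a b := a ≠ b ∧ Disjoint a.1 b.1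
  symm := ⟨fun a b h => ⟨h.1.symm, h.2.symm⟩⟩
  loopless := ⟨fun a h => h.1 rfl⟩

instance kneserGraph.adjDecidable (n k : ℕ) : DecidableRel (kneserGraph n k).Adj :=
  fun a b => inferInstanceAs (Decidable (a ≠ b ∧ Disjoint a.1 b.1))

/-- The fractional chromatic number: the infimum of `n / k` over all pairs `(n, k)` such that
`G` admits a homomorphism into the Kneser graph `K_{n;k}`. -/
noncomputable def fracChromaticNumber (G : SimpleGraph V) : ℝ :=
  sInf {q : ℝ | ∃ n k : ℕ, 0 < k ∧ Nonempty (G →g kneserGraph n k) ∧ q = (n : ℝ) / k}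

/-- The automorphism group of `H`, as a finset of permutations of the vertices. -/
def autSet [Fintype V] [DecidableEq V] (H : SimpleGraph V) [DecidableRel H.Adj] :
    Finset (Equiv.Perm V) :=
  Finset.univ.filter fun π => ∀ u v, H.Adj (π u) (π v) ↔ H.Adj u v

end SpectralFrac

/-!
Write `A = A⁺ - A⁻` for the adjacency matrix of `G`: both parts are positive semidefinite,
`A⁺ A⁻ = 0`, `‖A⁺‖²_F = s⁺(G)`, `‖A⁻‖²_F = s⁻(G)`, and `A⁺`, `A⁻` agree off the edges of `G`.

On `H`, average the projection onto the `λ_min`-eigenspace over `Aut H` and normalise it to a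
correlation matrix `M`. Edge-transitivity makes `M` equal to a constant `-t` on all edges, and
comparing `⟪A_H, ·⟫` on the averaged matrix `F` with the Rayleigh bound for `λ_max` on the vector
`(√F_zz)_z` gives `|λ_min| ≤ t λ_max`.

Pull `M` back to `G` along the homomorphism. By the Schur product theorem
`∑ (A⁺)²_{uv} M_{uv} ≥ 0`; since `|M| ≤ 1` and `A⁺ = A⁻` wherever `M ≠ -t`, this and
Cauchy–Schwarz on `{M = -t}` give `t s⁺ ≤ s⁻`, and symmetrically `t s⁻ ≤ s⁺`. Hence
`|λ_min| s⁺ ≤ t λ_max s⁺ ≤ λ_max s⁻`, and likewise with `s⁺` and `s⁻` exchanged.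
-/

lemma mul_sum_sq_le_sum_sq {ι : Type*} [Fintype ι] {p q m : ι → ℝ} {t : ℝ}
    (hm : ∀ i, m i ≤ 1) (hpm : 0 ≤ ∑ i, p i ^ 2 * m i) (hpq : ∀ i, m i ≠ -t → p i = q i)
    (horth : ∑ i, p i * q i = 0) :
    t * ∑ i, p i ^ 2 ≤ ∑ i, q i ^ 2 := by
  classical
  -- With `S = {m = -t}` and `r = ∑_{Sᶜ} p²`: the hypothesis `hpm` gives `t ∑_S p² ≤ r`, and
  -- orthogonality gives `∑_S p q = -r`, hence `r² ≤ ∑_S p² ∑_S q²` by Cauchy–Schwarz.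
  set S := univ.filter fun i => m i = -t
  set T := univ.filter fun i => m i ≠ -t
  have split (f : ι → ℝ) : ∑ i, f i = ∑ i ∈ S, f i + ∑ i ∈ T, f i :=
    (sum_filter_add_sum_filter_not _ _ _).symm
  have hS {i} (hi : i ∈ S) : m i = -t := (mem_filter.mp hi).2
  have hT {i} (hi : i ∈ T) : p i = q i := hpq i (mem_filter.mp hi).2
  set r := ∑ i ∈ T, p i ^ 2
  have hq_off : ∑ i ∈ T, q i ^ 2 = r := sum_congr rfl fun i hi => by rw [hT hi]
  have hpq_on : ∑ i ∈ S, p i * q i = -r := by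
    have hpq_off : ∑ i ∈ T, p i * q i = r := sum_congr rfl fun i hi => by rw [← hT hi, sq]
    linarith [split fun i => p i * q i]
  have hcone : t * ∑ i ∈ S, p i ^ 2 ≤ r := by
    have hon : ∑ i ∈ S, p i ^ 2 * m i = -t * ∑ i ∈ S, p i ^ 2 := by
      rw [mul_sum]; exact sum_congr rfl fun i hi => by rw [hS hi]; ring
    have hoff : ∑ i ∈ T, p i ^ 2 * m i ≤ r :=
      sum_le_sum fun i _ => mul_le_of_le_one_right (sq_nonneg _) (hm i)
    linarith [split fun i => p i ^ 2 * m i]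
  have hcs : r ^ 2 ≤ (∑ i ∈ S, p i ^ 2) * ∑ i ∈ S, q i ^ 2 := by
    simpa [hpq_on] using sum_mul_sq_le_sq_mul_sq S p q
  have hp : 0 ≤ ∑ i ∈ S, p i ^ 2 := sum_nonneg fun i _ => sq_nonneg _
  have hr : 0 ≤ r := sum_nonneg fun i _ => sq_nonneg _
  have htr : t * r ≤ ∑ i ∈ S, q i ^ 2 := by
    rcases hp.eq_or_lt with hp0 | hp0
    · have hr0 : r = 0 := by
        rw [← hp0, zero_mul] at hcs
        exact pow_eq_zero_iff two_ne_zero |>.mp (le_antisymm hcs (sq_nonneg r))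
      rw [hr0, mul_zero]; exact sum_nonneg fun i _ => sq_nonneg _
    · refine le_of_mul_le_mul_left ?_ hp0
      nlinarith [mul_le_mul_of_nonneg_right hcone hr]
  rw [split fun i => p i ^ 2, split fun i => q i ^ 2, hq_off]
  linarith

namespace Matrix

variable {n : Type*}

lemma PosSemidef.apply_sq_le {M : Matrix n n ℝ} (hM : M.PosSemidef) (u v : n) :
    M u v ^ 2 ≤ M u u * M v v := by
  have h := (hM.submatrix ![u, v]).det_nonneg
  have hs : M v u = M u v := by simpa using hM.isHermitian.apply u v
  simp only [det_fin_two, submatrix_apply, Matrix.cons_val_zero, Matrix.cons_val_one, hs] at h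
  nlinarith

variable [Fintype n]

lemma PosSemidef.sum_sq_mul_nonneg {P M : Matrix n n ℝ} (hP : P.PosSemidef)
    (hM : M.PosSemidef) : 0 ≤ ∑ u, ∑ v, P u v ^ 2 * M u v := by
  simpa [dotProduct, mulVec, sq] using
    ((hP.hadamard hP).hadamard hM).dotProduct_mulVec_nonneg fun _ => 1

lemma PosSemidef.mul_sum_sq_le_sum_sq {P N M : Matrix n n ℝ} {t : ℝ} (hP : P.PosSemidef)
    (hM : M.PosSemidef) (hdiag : ∀ u, M u u ≤ 1) (hPN : ∀ u v, M u v ≠ -t → P u v = N u v)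
    (horth : ∑ u, ∑ v, P u v * N u v = 0) :
    t * ∑ u, ∑ v, P u v ^ 2 ≤ ∑ u, ∑ v, N u v ^ 2 := by
  have hM1 (u v : n) : M u v ≤ 1 := by
    have := hM.apply_sq_le u v
    nlinarith [mul_le_one₀ (hdiag u) hM.diag_nonneg (hdiag v)]
  simp only [← Fintype.sum_prod_type'] at horth ⊢
  exact _root_.mul_sum_sq_le_sum_sq (fun i => hM1 i.1 i.2)
    (by simpa only [← Fintype.sum_prod_type'] using hP.sum_sq_mul_nonneg hM)
    (fun i => hPN i.1 i.2) horth

lemma sum_sum_mul_eq_trace_mul {X Y : Matrix n n ℝ} (hY : Y.IsHermitian) :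
    ∑ u, ∑ v, X u v * Y u v = (X * Y).trace := by
  have hY' : Y.IsSymm := by simpa using hY
  simp [trace, mul_apply, hY'.apply]

variable [DecidableEq n]

/-- The correlation matrix `F x y / √(F x x * F y y)`, with the convention `r / 0 = 0`. -/
noncomputable def correlation (F : Matrix n n ℝ) : Matrix n n ℝ :=
  diagonal (fun z => (√(F z z))⁻¹) * F * diagonal (fun z => (√(F z z))⁻¹)

lemma correlation_apply (F : Matrix n n ℝ) (x y : n) :
    correlation F x y = F x y / (√(F x x) * √(F y y)) := by
  simp only [correlation, mul_diagonal, diagonal_mul]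
  field_simp

lemma PosSemidef.correlation {F : Matrix n n ℝ} (hF : F.PosSemidef) :
    F.correlation.PosSemidef := by
  simpa [Matrix.correlation] using hF.conjTranspose_mul_mul_same (diagonal fun z => (√(F z z))⁻¹)

lemma correlation_apply_self_le_one (F : Matrix n n ℝ) (z : n) : correlation F z z ≤ 1 := by
  rw [correlation_apply]
  rcases le_total 0 (F z z) with h | h
  · rw [Real.mul_self_sqrt h]
    exact div_self_le_one _
  · simp [Real.sqrt_eq_zero'.mpr h]

open scoped MatrixOrder in
lemma posSemidef_cfc {f : ℝ → ℝ} (hf : ∀ x, 0 ≤ f x) (A : Matrix n n ℝ) :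
    (cfc f A).PosSemidef :=
  (cfc_nonneg fun x _ => hf x).posSemidef

open scoped MatrixOrder in
lemma posSemidef_posPart (A : Matrix n n ℝ) : A⁺.PosSemidef :=
  (CFC.posPart_nonneg A).posSemidef

open scoped MatrixOrder in
lemma posSemidef_negPart (A : Matrix n n ℝ) : A⁻.PosSemidef :=
  (CFC.negPart_nonneg A).posSemidef

lemma sum_sum_posPart_mul_negPart (A : Matrix n n ℝ) : ∑ u, ∑ v, A⁺ u v * A⁻ u v = 0 := by
  rw [sum_sum_mul_eq_trace_mul (posSemidef_negPart A).isHermitian,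
    CFC.posPart_mul_negPart, trace_zero]

namespace IsHermitian

variable {A : Matrix n n ℝ} (hA : A.IsHermitian)

lemma trace_cfc (f : ℝ → ℝ) : (cfc f A).trace = ∑ i, f (hA.eigenvalues i) := by
  rw [hA.cfc_eq, IsHermitian.cfc, Unitary.conjStarAlgAut_apply, trace_mul_cycle,
    Unitary.coe_star_mul_self, one_mul, trace_diagonal]
  rfl

lemma sum_sum_cfc_mul_cfc (f g : ℝ → ℝ) :
    ∑ u, ∑ v, cfc f A u v * cfc g A u v = ∑ i, f (hA.eigenvalues i) * g (hA.eigenvalues i) := by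
  have hcont (h : ℝ → ℝ) : ContinuousOn h (spectrum ℝ A) := A.finite_real_spectrum.continuousOn h
  rw [sum_sum_mul_eq_trace_mul (cfc_predicate g A), ← cfc_mul f g A (hcont f) (hcont g),
    hA.trace_cfc]

lemma sum_sum_posPart_sq : ∑ u, ∑ v, A⁺ u v ^ 2 = ∑ i, (hA.eigenvalues i)⁺ ^ 2 := by
  simp only [sq]
  rw [CFC.posPart_def, cfcₙ_eq_cfc, hA.sum_sum_cfc_mul_cfc]

lemma sum_sum_negPart_sq : ∑ u, ∑ v, A⁻ u v ^ 2 = ∑ i, (hA.eigenvalues i)⁻ ^ 2 := by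
  simp only [sq]
  rw [CFC.negPart_def, cfcₙ_eq_cfc, hA.sum_sum_cfc_mul_cfc]

open scoped MatrixOrder in
lemma dotProduct_mulVec_le (u : n → ℝ) :
    u ⬝ᵥ A *ᵥ u ≤ (⨆ i, hA.eigenvalues i) * (u ⬝ᵥ u) := by
  have hle : A ≤ algebraMap ℝ _ (⨆ i, hA.eigenvalues i) := by
    refine le_algebraMap_of_spectrum_le fun x hx => ?_
    obtain ⟨i, rfl⟩ := hA.spectrum_real_eq_range_eigenvalues ▸ hx
    exact le_ciSup (Set.finite_range _).bddAbove i
  have := (le_iff.mp hle).dotProduct_mulVec_nonneg u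
  rwa [star_trivial, sub_mulVec, dotProduct_sub, sub_nonneg, Algebra.algebraMap_eq_smul_one,
    smul_mulVec, one_mulVec, dotProduct_smul, smul_eq_mul] at this

end IsHermitian

end Matrix

namespace SpectralFrac

section AdjacencySums

variable {W : Type*} [Fintype W] (H : SimpleGraph W) [DecidableRel H.Adj]

lemma sum_adjMatrix_mul_of_forall_adj {g : W → W → ℝ} {k : ℝ}
    (hg : ∀ x y, H.Adj x y → g x y = k) :
    ∑ x, ∑ y, H.adjMatrix ℝ x y * g x y = k * ∑ x, ∑ y, H.adjMatrix ℝ x y := by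
  simp only [mul_sum]
  refine sum_congr rfl fun x _ => sum_congr rfl fun y _ => ?_
  by_cases h : H.Adj x y <;> simp [h, hg]

lemma sum_adjMatrix_pos {x y : W} (h : H.Adj x y) : 0 < ∑ x, ∑ y, H.adjMatrix ℝ x y := by
  have hnonneg (x y : W) : 0 ≤ H.adjMatrix ℝ x y := by
    by_cases h : H.Adj x y <;> simp [h]
  exact sum_pos' (fun x _ => sum_nonneg fun y _ => hnonneg x y)
    ⟨x, mem_univ _, sum_pos' (fun y _ => hnonneg x y) ⟨y, mem_univ _, by simp [h]⟩⟩

end AdjacencySums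

section Automorphisms

variable {W : Type*} [Fintype W] [DecidableEq W] {H : SimpleGraph W} [DecidableRel H.Adj]

lemma one_mem_autSet : (1 : Equiv.Perm W) ∈ autSet H := by
  simp [autSet]

lemma mul_mem_autSet_iff {π σ : Equiv.Perm W} (hσ : σ ∈ autSet H) :
    π * σ ∈ autSet H ↔ π ∈ autSet H := by
  simp only [autSet, mem_filter, mem_univ, true_and, Equiv.Perm.mul_apply] at hσ ⊢
  refine ⟨fun h u v => ?_, fun h u v => by rw [h, hσ]⟩
  have h₁ := h (σ⁻¹ u) (σ⁻¹ v)
  have h₂ := hσ (σ⁻¹ u) (σ⁻¹ v)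
  simp only [Equiv.Perm.coe_inv, Equiv.apply_symm_apply] at h₁ h₂
  exact h₁.trans h₂.symm

lemma sum_adjMatrix_mul_comp {π : Equiv.Perm W} (hπ : π ∈ autSet H) (g : W → W → ℝ) :
    ∑ x, ∑ y, H.adjMatrix ℝ x y * g (π x) (π y) = ∑ x, ∑ y, H.adjMatrix ℝ x y * g x y := by
  have hadj (x y : W) : H.Adj (π x) (π y) ↔ H.Adj x y := (mem_filter.mp hπ).2 x y
  simp only [← Fintype.sum_prod_type']
  exact Fintype.sum_equiv (π.prodCongr π) _ _ fun p => by simp [SimpleGraph.adjMatrix_apply, hadj]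

variable (H) in
/-- The group average of `E` over `Aut H`, left unnormalised (no factor `1 / |Aut H|`). -/
def autAverage (E : Matrix W W ℝ) : Matrix W W ℝ :=
  ∑ π ∈ autSet H, E.submatrix π π

variable {E : Matrix W W ℝ}

lemma autAverage_apply (x y : W) : autAverage H E x y = ∑ π ∈ autSet H, E (π x) (π y) := by
  simp [autAverage, Matrix.sum_apply]

lemma autAverage_apply_perm {σ : Equiv.Perm W} (hσ : σ ∈ autSet H) (x y : W) :
    autAverage H E (σ x) (σ y) = autAverage H E x y := by
  simp only [autAverage_apply]
  exact sum_equiv (Equiv.mulRight σ) (fun π => (mul_mem_autSet_iff hσ).symm) fun _ _ => rfl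

lemma posSemidef_autAverage (hE : E.PosSemidef) : (autAverage H E).PosSemidef :=
  posSemidef_sum _ fun π _ => hE.submatrix π

lemma trace_autAverage : (autAverage H E).trace = #(autSet H) * E.trace := by
  have h (π : Equiv.Perm W) : (E.submatrix π π).trace = E.trace := Equiv.sum_comp π fun z => E z z
  rw [autAverage, trace_sum, sum_congr rfl fun π _ => h π, sum_const, nsmul_eq_mul]

lemma sum_adjMatrix_mul_autAverage :
    ∑ x, ∑ y, H.adjMatrix ℝ x y * autAverage H E x y
      = #(autSet H) * ∑ x, ∑ y, H.adjMatrix ℝ x y * E x y := by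
  simp_rw [autAverage_apply, mul_sum]
  rw [sum_congr rfl fun x _ => sum_comm, sum_comm,
    sum_congr rfl fun π hπ => sum_adjMatrix_mul_comp hπ fun x y => E x y, sum_const, nsmul_eq_mul]
  simp only [mul_sum]

lemma IsEdgeTransitive.apply_eq_apply (hH : IsEdgeTransitive H) {F : Matrix W W ℝ}
    (hF : F.IsSymm) (hinv : ∀ σ ∈ autSet H, ∀ x y, F (σ x) (σ y) = F x y) {x y x' y' : W}
    (h : H.Adj x y) (h' : H.Adj x' y') :
    F x' y' = F x y ∧ F x' x' * F y' y' = F x x * F y y := by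
  obtain ⟨ψ, hψ⟩ := hH h h'
  have hinvψ := hinv ψ.toEquiv (mem_filter.mpr ⟨mem_univ _, fun u v => ψ.map_adj_iff⟩)
  simp only [RelIso.coe_fn_toEquiv] at hinvψ
  rcases Sym2.eq_iff.mp hψ with ⟨rfl, rfl⟩ | ⟨rfl, rfl⟩
  · exact ⟨hinvψ x y, by rw [hinvψ, hinvψ]⟩
  · exact ⟨by rw [hinvψ, hF.apply], by rw [hinvψ, hinvψ, mul_comm]⟩

end Automorphisms

section Spectrum

variable {V : Type*} [Fintype V] [DecidableEq V] (G : SimpleGraph V) [DecidableRel G.Adj]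

lemma sum_eigenvalues_adjMatrix : ∑ i, (adjMatrix_isHermitian G).eigenvalues i = 0 := by
  have h := (adjMatrix_isHermitian G).trace_eq_sum_eigenvalues
  rw [SimpleGraph.trace_adjMatrix] at h
  simpa using h.symm

lemma eigenvalues_adjMatrix_ne_zero {x y : V} (h : G.Adj x y) :
    (adjMatrix_isHermitian G).eigenvalues ≠ 0 := by
  rw [Ne, IsHermitian.eigenvalues_eq_zero_iff]
  intro h0
  simpa [h] using congrFun₂ h0 x y

lemma exists_eigenvalues_adjMatrix_neg {x y : V} (h : G.Adj x y) :
    ∃ i, (adjMatrix_isHermitian G).eigenvalues i < 0 := by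
  by_contra! hnn
  refine eigenvalues_adjMatrix_ne_zero G h (funext fun i => ?_)
  exact (sum_eq_zero_iff_of_nonneg fun j _ => hnn j).mp (sum_eigenvalues_adjMatrix G) i (mem_univ i)

lemma exists_eigenvalues_adjMatrix_pos {x y : V} (h : G.Adj x y) :
    ∃ i, 0 < (adjMatrix_isHermitian G).eigenvalues i := by
  by_contra! hnp
  refine eigenvalues_adjMatrix_ne_zero G h (funext fun i => ?_)
  exact (sum_eq_zero_iff_of_nonpos fun j _ => hnp j).mp (sum_eigenvalues_adjMatrix G) i (mem_univ i)

lemma lamMin_neg {x y : V} (h : G.Adj x y) : lamMin G < 0 := by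
  obtain ⟨i, hi⟩ := exists_eigenvalues_adjMatrix_neg G h
  exact (ciInf_le (Set.finite_range _).bddBelow i).trans_lt hi

lemma lamMax_pos {x y : V} (h : G.Adj x y) : 0 < lamMax G := by
  obtain ⟨i, hi⟩ := exists_eigenvalues_adjMatrix_pos G h
  exact hi.trans_le (le_ciSup (Set.finite_range _).bddAbove i)

lemma sPos_pos {x y : V} (h : G.Adj x y) : 0 < sPos G := by
  obtain ⟨i, hi⟩ := exists_eigenvalues_adjMatrix_pos G h
  exact sum_pos' (fun j _ => by split_ifs <;> positivity)
    ⟨i, mem_univ i, by rw [if_pos hi]; exact pow_pos hi 2⟩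

lemma sNeg_pos {x y : V} (h : G.Adj x y) : 0 < sNeg G := by
  obtain ⟨i, hi⟩ := exists_eigenvalues_adjMatrix_neg G h
  exact sum_pos' (fun j _ => by split_ifs <;> positivity)
    ⟨i, mem_univ i, by rw [if_pos hi]; exact sq_pos_of_neg hi⟩

lemma sPos_eq_sum_sq : sPos G = ∑ u, ∑ v, (G.adjMatrix ℝ)⁺ u v ^ 2 := by
  rw [(adjMatrix_isHermitian G).sum_sum_posPart_sq, sPos]
  refine sum_congr rfl fun i _ => ?_
  split_ifs with h
  · rw [posPart_of_nonneg h.le]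
  · rw [posPart_of_nonpos (not_lt.mp h), sq, mul_zero]

lemma sNeg_eq_sum_sq : sNeg G = ∑ u, ∑ v, (G.adjMatrix ℝ)⁻ u v ^ 2 := by
  rw [(adjMatrix_isHermitian G).sum_sum_negPart_sq, sNeg]
  refine sum_congr rfl fun i _ => ?_
  split_ifs with h
  · rw [negPart_of_nonpos h.le, neg_sq]
  · rw [negPart_of_nonneg (not_lt.mp h), sq, mul_zero]

lemma sum_adjMatrix_mul_le_lamMax (u : V → ℝ) :
    ∑ x, ∑ y, G.adjMatrix ℝ x y * (u x * u y) ≤ lamMax G * ∑ z, u z ^ 2 := by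
  have := (adjMatrix_isHermitian G).dotProduct_mulVec_le u
  simp only [lamMax, dotProduct, mulVec, mul_sum, sq] at this ⊢
  convert this using 3 with x _ y
  ring

lemma posPart_apply_eq_negPart_apply {u v : V} (h : ¬G.Adj u v) :
    (G.adjMatrix ℝ)⁺ u v = (G.adjMatrix ℝ)⁻ u v := by
  have := congrFun₂
    (CFC.posPart_sub_negPart (G.adjMatrix ℝ) (adjMatrix_isHermitian G).isSelfAdjoint) u v
  simpa [h, sub_eq_zero] using this

lemma mul_sPos_le_sNeg {M : Matrix V V ℝ} {t : ℝ} (hM : M.PosSemidef) (hdiag : ∀ u, M u u ≤ 1)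
    (hadj : ∀ u v, G.Adj u v → M u v = -t) : t * sPos G ≤ sNeg G := by
  rw [sPos_eq_sum_sq, sNeg_eq_sum_sq]
  exact (posSemidef_posPart _).mul_sum_sq_le_sum_sq hM hdiag
    (fun u v huv => posPart_apply_eq_negPart_apply G fun h => huv (hadj u v h))
    (sum_sum_posPart_mul_negPart _)

lemma mul_sNeg_le_sPos {M : Matrix V V ℝ} {t : ℝ} (hM : M.PosSemidef) (hdiag : ∀ u, M u u ≤ 1)
    (hadj : ∀ u v, G.Adj u v → M u v = -t) : t * sNeg G ≤ sPos G := by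
  rw [sPos_eq_sum_sq, sNeg_eq_sum_sq]
  exact (posSemidef_negPart _).mul_sum_sq_le_sum_sq hM hdiag
    (fun u v huv => (posPart_apply_eq_negPart_apply G fun h => huv (hadj u v h)).symm)
    (by simpa only [mul_comm] using sum_sum_posPart_mul_negPart _)

end Spectrum

section EdgeTransitive

variable {W : Type*} [Fintype W] [DecidableEq W] (H : SimpleGraph W) [DecidableRel H.Adj]

lemma exists_posSemidef_sum_adjMatrix_mul_eq_lamMin_mul_trace [Nonempty W] :
    ∃ E : Matrix W W ℝ, E.PosSemidef ∧
      ∑ x, ∑ y, H.adjMatrix ℝ x y * E x y = lamMin H * E.trace ∧ 0 < E.trace := by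
  have hA := adjMatrix_isHermitian H
  obtain ⟨i₀, hi₀⟩ := exists_eq_ciInf_of_finite (f := hA.eigenvalues)
  -- `E` is the orthogonal projection onto the `λ_min`-eigenspace.
  let g : ℝ → ℝ := fun x => if x = lamMin H then 1 else 0
  refine ⟨cfc g (H.adjMatrix ℝ), posSemidef_cfc (fun x => by positivity) _, ?_, ?_⟩
  · have h := hA.sum_sum_cfc_mul_cfc id g
    rw [cfc_id ℝ _ hA.isSelfAdjoint] at h
    rw [h, hA.trace_cfc, mul_sum]
    refine sum_congr rfl fun i _ => ?_
    by_cases h : hA.eigenvalues i = lamMin H <;> simp [g, h]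
  · rw [hA.trace_cfc]
    exact sum_pos' (fun i _ => by positivity) ⟨i₀, mem_univ _, by simp [g, hi₀, lamMin]⟩

lemma exists_invariant_posSemidef_sum_adjMatrix_mul_eq_lamMin_mul_trace [Nonempty W] :
    ∃ F : Matrix W W ℝ, F.PosSemidef ∧ (∀ σ ∈ autSet H, ∀ x y, F (σ x) (σ y) = F x y) ∧
      ∑ x, ∑ y, H.adjMatrix ℝ x y * F x y = lamMin H * F.trace ∧ 0 < F.trace := by
  obtain ⟨E, hE, hEA, htr⟩ := exists_posSemidef_sum_adjMatrix_mul_eq_lamMin_mul_trace H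
  have hcard : (0 : ℝ) < #(autSet H) := Nat.cast_pos.mpr (card_pos.mpr ⟨1, one_mem_autSet⟩)
  refine ⟨autAverage H E, posSemidef_autAverage hE, fun σ hσ => autAverage_apply_perm hσ, ?_, ?_⟩
  · rw [sum_adjMatrix_mul_autAverage, trace_autAverage, hEA]
    ring
  · rw [trace_autAverage]
    positivity

variable {H} in
lemma exists_correlation_of_isEdgeTransitive (hH : IsEdgeTransitive H) {x₀ y₀ : W}
    (h₀ : H.Adj x₀ y₀) :
    ∃ (M : Matrix W W ℝ) (t : ℝ), M.PosSemidef ∧ (∀ z, M z z ≤ 1) ∧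
      (∀ x y, H.Adj x y → M x y = -t) ∧ -lamMin H ≤ t * lamMax H := by
  have : Nonempty W := ⟨x₀⟩
  obtain ⟨F, hF, hinv, hFA, htr⟩ :=
    exists_invariant_posSemidef_sum_adjMatrix_mul_eq_lamMin_mul_trace H
  have hedge {x y} (h : H.Adj x y) :=
    hH.apply_eq_apply (by simpa using hF.isHermitian) hinv h₀ h
  set e := F x₀ y₀
  set c := F x₀ x₀ * F y₀ y₀
  have hsqrt {x y} (h : H.Adj x y) : √(F x x) * √(F y y) = √c := by
    rw [← Real.sqrt_mul hF.diag_nonneg, (hedge h).2]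
  set m := ∑ x, ∑ y, H.adjMatrix ℝ x y
  have hm : 0 < m := sum_adjMatrix_pos H h₀
  have he : e * m = lamMin H * F.trace := by
    rw [← hFA, sum_adjMatrix_mul_of_forall_adj H fun x y h => (hedge h).1]
  have hray : √c * m ≤ lamMax H * F.trace := by
    have h := sum_adjMatrix_mul_le_lamMax H fun z => √(F z z)
    rw [sum_adjMatrix_mul_of_forall_adj H fun x y h => hsqrt h] at h
    simp only [Real.sq_sqrt hF.diag_nonneg] at h
    exact h
  have hmin := lamMin_neg H h₀
  have he_neg : e < 0 := by nlinarith
  have hc : 0 < √c := Real.sqrt_pos.mpr ((sq_pos_of_neg he_neg).trans_le (hF.apply_sq_le x₀ y₀))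
  refine ⟨F.correlation, -e / √c, hF.correlation, F.correlation_apply_self_le_one,
    fun x y h => by rw [correlation_apply, (hedge h).1, hsqrt h, neg_div, neg_neg], ?_⟩
  rw [div_mul_eq_mul_div, le_div_iff₀ hc]
  refine le_of_mul_le_mul_right ?_ hm
  calc -lamMin H * √c * m = -lamMin H * (√c * m) := by ring
    _ ≤ -lamMin H * (lamMax H * F.trace) := by gcongr; linarith
    _ = -e * lamMax H * m := by linear_combination lamMax H * he

end EdgeTransitive

end SpectralFrac

/-- **Theorem.** If `G` has an edge and there is a homomorphism from `G` to an edge-transitive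
graph `H`, then `λ_max(H)/|λ_min(H)| ≥ max { s⁺(G)/s⁻(G), s⁻(G)/s⁺(G) }`. -/
theorem SpectralFrac.hom_to_edgeTransitive_spectral_bound {V W : Type*}
    [Fintype V] [DecidableEq V] [Fintype W] [DecidableEq W]
    (G : SimpleGraph V) [DecidableRel G.Adj] (H : SimpleGraph W) [DecidableRel H.Adj]
    (hG : G.edgeSet.Nonempty) (hH : IsEdgeTransitive H) (hhom : Nonempty (G →g H)) :
    max (sPos G / sNeg G) (sNeg G / sPos G) ≤ lamMax H / |lamMin H| := by
  obtain ⟨e, he⟩ := hG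
  induction e using Sym2.ind with | _ a b => ?_
  obtain ⟨f⟩ := hhom
  have hfab : H.Adj (f a) (f b) := f.map_adj he
  obtain ⟨M, t, hM, hMdiag, hMadj, hbound⟩ := exists_correlation_of_isEdgeTransitive hH hfab
  have hMG : ∀ u v, G.Adj u v → M.submatrix f f u v = -t := fun u v h => hMadj _ _ (f.map_adj h)
  have hst := mul_sPos_le_sNeg G (hM.submatrix f) (fun u => hMdiag _) hMG
  have hts := mul_sNeg_le_sPos G (hM.submatrix f) (fun u => hMdiag _) hMG
  have hspos := sPos_pos G he
  have hsneg := sNeg_pos G he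
  have hΛ := lamMax_pos H hfab
  have hmin := lamMin_neg H hfab
  rw [abs_of_neg hmin, max_le_iff, div_le_div_iff₀ hsneg (neg_pos.mpr hmin),
    div_le_div_iff₀ hspos (neg_pos.mpr hmin)]
  constructor <;>
    nlinarith [mul_le_mul_of_nonneg_left hbound hspos.le, mul_le_mul_of_nonneg_left hbound hsneg.le]
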